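/- arXiv:1506.03316 — 10 statements merged into one kernel-verified Lean document; each statement's English description precedes it below -/
import Mathlib

section
/- For H > 0, the Maxwellian M(H,u,ξ) = (1/(gπ))·max(0, 2gH − (ξ−u)²)^{1/2} satisfies the second moment relation ∫_ℝ ξ²·M(H,u,ξ) dξ = H·u² + g·H²/2. -/
/-!
After the shift `ξ = x + u` the Maxwellian is `(1 / (g π)) √(R² - x²)` with `R² = 2gH`, a
semicircle. Its moments follow by scaling from those of `√(1 - x²)` on `[-1, 1]`: the zeroth is
`π / 2`, the first vanishes by oddness, and the second is a quarter of the zeroth because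
`x (1 - x²)^{3/2}`, an antiderivative of `(1 - 4x²) √(1 - x²)`, vanishes at `±1`. Hence
`∫ (x + u)² √(R² - x²) dx = π R² (R² + 4u²) / 8`.
-/

open MeasureTheory Real

lemma sqrt_max_zero (t : ℝ) : √(max 0 t) = √t := by
  rcases le_total t 0 with ht | ht
  · rw [max_eq_left ht, sqrt_zero, sqrt_eq_zero'.2 ht]
  · rw [max_eq_right ht]

lemma sqrt_sq_sub_sq_eq_zero {R x : ℝ} (hx : x ∉ Set.Icc (-|R|) |R|) : √(R ^ 2 - x ^ 2) = 0 := by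
  rw [Set.mem_Icc, ← abs_le, not_le] at hx
  exact sqrt_eq_zero'.2 (sub_nonpos.2 (sq_le_sq.2 hx.le))

lemma integral_mul_sqrt_sq_sub_sq (f : ℝ → ℝ) (R : ℝ) :
    ∫ x, f x * √(R ^ 2 - x ^ 2) = ∫ x in -|R|..|R|, f x * √(R ^ 2 - x ^ 2) := by
  rw [intervalIntegral.integral_of_le (by simp), ← integral_Icc_eq_integral_Ioc,
    setIntegral_eq_integral_of_forall_compl_eq_zero fun x hx => by
      rw [sqrt_sq_sub_sq_eq_zero hx, mul_zero]]

lemma integrable_pow_mul_sqrt_sq_sub_sq (n : ℕ) (R : ℝ) :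
    Integrable fun x => x ^ n * √(R ^ 2 - x ^ 2) :=
  (by fun_prop : Continuous _).integrable_of_hasCompactSupport <|
    HasCompactSupport.intro isCompact_Icc fun x hx => by rw [sqrt_sq_sub_sq_eq_zero hx, mul_zero]

lemma integral_mul_sqrt_sq_sub_sq_eq_zero (R : ℝ) : ∫ x, x * √(R ^ 2 - x ^ 2) = 0 := by
  have h := integral_neg_eq_self (fun x => x * √(R ^ 2 - x ^ 2)) volume
  simp only [neg_mul, neg_sq, integral_neg] at h
  linarith

lemma hasDerivAt_mul_one_sub_sq_mul_sqrt_one_sub_sq {x : ℝ} (hx : x ∈ Set.Ioo (-1 : ℝ) 1) :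
    HasDerivAt (fun x => x * (1 - x ^ 2) * √(1 - x ^ 2)) ((1 - 4 * x ^ 2) * √(1 - x ^ 2)) x := by
  have hpos : 0 < 1 - x ^ 2 := by nlinarith [hx.1, hx.2]
  have hq : HasDerivAt (fun x : ℝ => 1 - x ^ 2) (-(2 * x)) x := by
    simpa using (hasDerivAt_pow 2 x).const_sub 1
  refine (((hasDerivAt_id' x).mul hq).mul (hq.sqrt hpos.ne')).congr_deriv ?_
  have hs : √(1 - x ^ 2) ^ 2 = 1 - x ^ 2 := sq_sqrt hpos.le
  simp only [Pi.mul_apply]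
  field_simp
  linear_combination x ^ 2 * hs

lemma integral_sq_mul_sqrt_one_sub_sq : ∫ x in -1..1, x ^ 2 * √(1 - x ^ 2) = π / 8 := by
  have key : ∫ x in -1..1, (1 - 4 * x ^ 2) * √(1 - x ^ 2) = 0 := by
    rw [intervalIntegral.integral_eq_sub_of_hasDerivAt_of_le (by norm_num)
      (by fun_prop : Continuous fun x : ℝ => x * (1 - x ^ 2) * √(1 - x ^ 2)).continuousOn
      (fun x hx => hasDerivAt_mul_one_sub_sq_mul_sqrt_one_sub_sq hx)
      ((by fun_prop : Continuous fun x : ℝ => (1 - 4 * x ^ 2) * √(1 - x ^ 2)).intervalIntegrable _ _)]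
    norm_num
  have split : ∀ x : ℝ,
      (1 - 4 * x ^ 2) * √(1 - x ^ 2) = √(1 - x ^ 2) - 4 * (x ^ 2 * √(1 - x ^ 2)) := by
    intro x
    ring
  simp_rw [split] at key
  rw [intervalIntegral.integral_sub
      ((by fun_prop : Continuous fun x : ℝ => √(1 - x ^ 2)).intervalIntegrable _ _)
      ((by fun_prop : Continuous fun x : ℝ => 4 * (x ^ 2 * √(1 - x ^ 2))).intervalIntegrable _ _),
    intervalIntegral.integral_const_mul, integral_sqrt_one_sub_sq] at key
  linarith

lemma sqrt_sq_sub_sq_eq_mul_sqrt_one_sub_div_sq {R : ℝ} (hR : 0 < R) (x : ℝ) :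
    √(R ^ 2 - x ^ 2) = R * √(1 - (x / R) ^ 2) := by
  rw [← sqrt_sq hR.le, ← sqrt_mul (sq_nonneg R), sqrt_sq hR.le]
  congr 1
  field_simp

lemma integral_pow_mul_sqrt_sq_sub_sq (n : ℕ) {R : ℝ} (hR : 0 < R) :
    ∫ x, x ^ n * √(R ^ 2 - x ^ 2) = R ^ (n + 2) * ∫ x in -1..1, x ^ n * √(1 - x ^ 2) := by
  have scale : ∀ x, x ^ n * √(R ^ 2 - x ^ 2) =
      R ^ (n + 1) * ((x / R) ^ n * √(1 - (x / R) ^ 2)) := by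
    intro x
    rw [sqrt_sq_sub_sq_eq_mul_sqrt_one_sub_div_sq hR]
    generalize √(1 - (x / R) ^ 2) = s
    rw [div_pow, pow_succ]
    field_simp
  have unit := integral_mul_sqrt_sq_sub_sq (fun y => y ^ n) 1
  simp only [one_pow, abs_one] at unit
  simp_rw [scale]
  rw [integral_const_mul, Measure.integral_comp_div (fun y => y ^ n * √(1 - y ^ 2)),
    abs_of_pos hR, smul_eq_mul, unit]
  ring

lemma integral_add_sq_mul_sqrt_sq_sub_sq (u : ℝ) {R : ℝ} (hR : 0 < R) :
    ∫ x, (x + u) ^ 2 * √(R ^ 2 - x ^ 2) = π * R ^ 2 * (R ^ 2 + 4 * u ^ 2) / 8 := by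
  have expand : ∀ x, (x + u) ^ 2 * √(R ^ 2 - x ^ 2) = x ^ 2 * √(R ^ 2 - x ^ 2) +
      (2 * u * (x ^ 1 * √(R ^ 2 - x ^ 2)) + u ^ 2 * (x ^ 0 * √(R ^ 2 - x ^ 2))) := by
    intro x
    ring
  have hi := integrable_pow_mul_sqrt_sq_sub_sq (R := R)
  simp_rw [expand]
  rw [integral_add (hi 2) (((hi 1).const_mul _).fun_add ((hi 0).const_mul _)),
    integral_add ((hi 1).const_mul _) ((hi 0).const_mul _), integral_const_mul, integral_const_mul,
    integral_pow_mul_sqrt_sq_sub_sq 2 hR, integral_pow_mul_sqrt_sq_sub_sq 0 hR]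
  simp only [pow_one, pow_zero, one_mul, integral_mul_sqrt_sq_sub_sq_eq_zero,
    integral_sq_mul_sqrt_one_sub_sq, integral_sqrt_one_sub_sq]
  ring

theorem stmt2 (g H u : ℝ) (hg : 0 < g) (hH : 0 < H) :
    (∫ ξ : ℝ, ξ ^ 2 * ((1 / (g * Real.pi)) * Real.sqrt (max 0 (2 * g * H - (ξ - u) ^ 2)))) =
      H * u ^ 2 + g * H ^ 2 / 2 := by
  set R := √(2 * g * H)
  have hR : 0 < R := sqrt_pos.2 (by positivity)
  have hR2 : R ^ 2 = 2 * g * H := sq_sqrt (by positivity)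
  have shift : ∫ ξ : ℝ, ξ ^ 2 * ((1 / (g * π)) * √(max 0 (2 * g * H - (ξ - u) ^ 2))) =
      1 / (g * π) * ∫ x, (x + u) ^ 2 * √(R ^ 2 - x ^ 2) := by
    rw [← integral_sub_right_eq_self (fun x => (x + u) ^ 2 * √(R ^ 2 - x ^ 2)) u,
      ← integral_const_mul]
    congr 1
    ext ξ
    rw [sub_add_cancel, sqrt_max_zero, hR2]
    ring
  rw [shift, integral_add_sq_mul_sqrt_sq_sub_sq u hR, hR2]
  field_simp
  ring
end

section
/- For H > 0, with M(H,u,ξ) = (1/(gπ))·max(0, 2gH − (ξ−u)²)^{1/2} and kinetic entropy H_K(f,ξ,z) = (ξ²/2)·f + (g²π²/6)·f³ + g·z·f, one has ∫_ℝ H_K(M(H,u,ξ), ξ, z_b) dξ = (H/2)·u² + (g/2)·H² + g·H·z_b. -/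
open MeasureTheory Real

/-!
After the shift `ξ = u + x`, the Maxwellian is `(1 / (g π)) √(a² - x²)` on `[-a, a]` with
`a² = 2 g H`, and its cube is `(a² - x²)` times itself, so the whole integrand is a quadratic
polynomial in `x` times the semicircle `√(a² - x²)`. Against the semicircle, `x` and `x² - a² / 4`
integrate to zero, being derivatives of multiples of `(a² - x²)^{3/2}`, while
`∫ √(a² - x²) = π a² / 2`.
-/

theorem sqrt_max_zero_pow_three (y : ℝ) : √(max 0 y) ^ 3 = y * √(max 0 y) := by
  rcases le_total y 0 with hy | hy
  · simp [max_eq_left hy]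
  · rw [max_eq_right hy, pow_succ, sq_sqrt hy]

section Semicircle

variable {a : ℝ}

theorem integral_sqrt_sq_sub_sq (ha : 0 ≤ a) :
    ∫ x in -a..a, √(a ^ 2 - x ^ 2) = π * a ^ 2 / 2 := by
  have hscale : ∀ x : ℝ, √(a ^ 2 - (a * x) ^ 2) = a * √(1 - x ^ 2) := fun x => by
    rw [show a ^ 2 - (a * x) ^ 2 = a ^ 2 * (1 - x ^ 2) by ring, sqrt_mul (by positivity),
      sqrt_sq ha]
  have hsub := intervalIntegral.smul_integral_comp_mul_left (fun x => √(a ^ 2 - x ^ 2)) a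
    (a := -1) (b := 1)
  simp only [hscale, intervalIntegral.integral_const_mul, integral_sqrt_one_sub_sq, smul_eq_mul,
    mul_neg, mul_one] at hsub
  rw [← hsub]
  ring

theorem hasDerivAt_linear_mul_sq_sub_sq_mul_sqrt (b c : ℝ) {x : ℝ} (hx : x ∈ Set.Ioo (-a) a) :
    HasDerivAt (fun x => (b + c * x) * ((a ^ 2 - x ^ 2) * √(a ^ 2 - x ^ 2)))
      ((c * a ^ 2 - 3 * b * x - 4 * c * x ^ 2) * √(a ^ 2 - x ^ 2)) x := by
  have hpos : 0 < a ^ 2 - x ^ 2 := by nlinarith [hx.1, hx.2]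
  have hsq : HasDerivAt (fun x : ℝ => a ^ 2 - x ^ 2) (-(2 * x)) x := by
    simpa using (hasDerivAt_pow 2 x).const_sub (a ^ 2)
  have hlin : HasDerivAt (fun x : ℝ => b + c * x) c x := by
    simpa using ((hasDerivAt_id x).const_mul c).const_add b
  refine (hlin.fun_mul (hsq.fun_mul (hsq.sqrt hpos.ne'))).congr_deriv ?_
  have hs := sq_sqrt hpos.le
  field_simp
  linear_combination (c * x ^ 2 + b * x) * hs

theorem integral_quadratic_mul_sqrt_sq_sub_sq (α β γ : ℝ) (ha : 0 ≤ a) :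
    ∫ x in -a..a, (α + β * x + γ * x ^ 2) * √(a ^ 2 - x ^ 2) =
      π * a ^ 2 / 2 * (α + γ * a ^ 2 / 4) := by
  set b := -(β / 3)
  set c := -(γ / 4)
  set G : ℝ → ℝ := fun x => (b + c * x) * ((a ^ 2 - x ^ 2) * √(a ^ 2 - x ^ 2))
  have hG := intervalIntegral.integral_eq_sub_of_hasDerivAt_of_le (by linarith) (f := G)
    (by fun_prop) (fun x hx => hasDerivAt_linear_mul_sq_sub_sq_mul_sqrt b c hx)
    ((by fun_prop : Continuous _).intervalIntegrable _ _)
  have hG_boundary : G a - G (-a) = 0 := by simp [G]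
  have hsplit : ∀ x, (α + β * x + γ * x ^ 2) * √(a ^ 2 - x ^ 2) =
      (α + γ * a ^ 2 / 4) * √(a ^ 2 - x ^ 2)
        + (c * a ^ 2 - 3 * b * x - 4 * c * x ^ 2) * √(a ^ 2 - x ^ 2) :=
    fun x => by ring
  simp_rw [hsplit]
  rw [intervalIntegral.integral_add ((by fun_prop : Continuous _).intervalIntegrable _ _)
      ((by fun_prop : Continuous _).intervalIntegrable _ _),
    intervalIntegral.integral_const_mul, hG, hG_boundary, integral_sqrt_sq_sub_sq ha]
  ring

theorem integral_quadratic_mul_sqrt_max_zero_sub_sq (α β γ : ℝ) {c : ℝ} (hc : 0 ≤ c) :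
    ∫ x, (α + β * x + γ * x ^ 2) * √(max 0 (c - x ^ 2)) = π * c / 2 * (α + γ * c / 4) := by
  obtain ⟨a, ha, rfl⟩ : ∃ a, 0 ≤ a ∧ c = a ^ 2 := ⟨√c, sqrt_nonneg c, (sq_sqrt hc).symm⟩
  have hout : ∀ x ∉ Set.Ioc (-a) a, (α + β * x + γ * x ^ 2) * √(max 0 (a ^ 2 - x ^ 2)) = 0 := by
    intro x hx
    have : a ^ 2 ≤ x ^ 2 := by
      rw [Set.mem_Ioc, not_and_or, not_lt, not_le] at hx
      rcases hx with hx | hx <;> nlinarith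
    simp [max_eq_left (sub_nonpos.2 this)]
  rw [← setIntegral_eq_integral_of_forall_compl_eq_zero hout,
    ← intervalIntegral.integral_of_le (by linarith),
    ← integral_quadratic_mul_sqrt_sq_sub_sq α β γ ha]
  refine intervalIntegral.integral_congr fun x hx => ?_
  rw [Set.uIcc_of_le (by linarith)] at hx
  rw [max_eq_right (sub_nonneg.2 (sq_le_sq' hx.1 hx.2))]

end Semicircle

theorem stmt3 (g H u zb : ℝ) (hg : 0 < g) (hH : 0 < H) :
    (∫ ξ : ℝ,
        (ξ ^ 2 / 2) * ((1 / (g * Real.pi)) * Real.sqrt (max 0 (2 * g * H - (ξ - u) ^ 2)))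
        + (g ^ 2 * Real.pi ^ 2 / 6) *
            ((1 / (g * Real.pi)) * Real.sqrt (max 0 (2 * g * H - (ξ - u) ^ 2))) ^ 3
        + g * zb * ((1 / (g * Real.pi)) * Real.sqrt (max 0 (2 * g * H - (ξ - u) ^ 2)))) =
      H / 2 * u ^ 2 + g / 2 * H ^ 2 + g * H * zb := by
  set k := 1 / (g * π)
  set K := g ^ 2 * π ^ 2 / 6
  set F : ℝ → ℝ := fun x => (k * u ^ 2 / 2 + K * k ^ 3 * (2 * g * H) + g * zb * k + k * u * x
    + (k / 2 - K * k ^ 3) * x ^ 2) * √(max 0 (2 * g * H - x ^ 2))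
  have hintegrand : ∀ ξ, ξ ^ 2 / 2 * (k * √(max 0 (2 * g * H - (ξ - u) ^ 2)))
      + K * (k * √(max 0 (2 * g * H - (ξ - u) ^ 2))) ^ 3
      + g * zb * (k * √(max 0 (2 * g * H - (ξ - u) ^ 2))) = F (ξ - u) := fun ξ => by
    rw [mul_pow, sqrt_max_zero_pow_three]
    ring
  simp_rw [hintegrand]
  rw [integral_sub_right_eq_self F u,
    integral_quadratic_mul_sqrt_max_zero_sub_sq _ _ _ (by positivity)]
  simp only [k, K]
  field_simp
  ring
end

section
/- If H, u, w, z_b, p_nh are smooth functions of (x,t), H > 0, and they satisfy: ∂_t H + ∂_x(Hu) = 0; ∂_t(Hu) + ∂_x(Hu² + (g/2)H² + H·p_nh) = −(gH + 2p_nh)·∂_x z_b; ∂_t(Hw) + ∂_x(Hwu) = 2p_nh; and ∂_x(Hu) − u·∂_x(H + 2z_b) + 2w = 0; then the energy balance ∂_t(η + gHz_b) + ∂_x(u·(η + gHz_b + (g/2)H² + H·p_nh)) = 0 holds, where η = H(u² + w²)/2 + (g/2)H². -/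
private lemma diffT {f : ℝ → ℝ → ℝ} (hf : ContDiff ℝ (⊤ : ℕ∞) (Function.uncurry f)) (x : ℝ) :
    Differentiable ℝ (fun s => f x s) :=
  (hf.differentiable (by simp)).comp ((differentiable_const x).prodMk differentiable_id)

private lemma diffX {f : ℝ → ℝ → ℝ} (hf : ContDiff ℝ (⊤ : ℕ∞) (Function.uncurry f)) (t : ℝ) :
    Differentiable ℝ (fun y => f y t) :=
  (hf.differentiable (by simp)).comp (differentiable_id.prodMk (differentiable_const t))

theorem stmt7 (g : ℝ) (hg : 0 < g) (H u w p : ℝ → ℝ → ℝ) (zb : ℝ → ℝ)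
    (hH : ContDiff ℝ (⊤ : ℕ∞) (Function.uncurry H)) (hu : ContDiff ℝ (⊤ : ℕ∞) (Function.uncurry u))
    (hw : ContDiff ℝ (⊤ : ℕ∞) (Function.uncurry w)) (hp : ContDiff ℝ (⊤ : ℕ∞) (Function.uncurry p))
    (hzb : ContDiff ℝ (⊤ : ℕ∞) zb)
    (hpos : ∀ x t, 0 < H x t)
    (mass : ∀ x t, deriv (fun s => H x s) t + deriv (fun y => H y t * u y t) x = 0)
    (momx : ∀ x t, deriv (fun s => H x s * u x s) t
        + deriv (fun y => H y t * (u y t) ^ 2 + g / 2 * (H y t) ^ 2 + H y t * p y t) x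
        = -(g * H x t + 2 * p x t) * deriv zb x)
    (momz : ∀ x t, deriv (fun s => H x s * w x s) t
        + deriv (fun y => H y t * w y t * u y t) x = 2 * p x t)
    (divfree : ∀ x t, deriv (fun y => H y t * u y t) x
        - u x t * deriv (fun y => H y t + 2 * zb y) x + 2 * w x t = 0) :
    ∀ x t,
      deriv (fun s =>
          H x s * ((u x s) ^ 2 + (w x s) ^ 2) / 2 + g / 2 * (H x s) ^ 2
            + g * H x s * zb x) t
        + deriv (fun y =>
            u y t * (H y t * ((u y t) ^ 2 + (w y t) ^ 2) / 2 + g / 2 * (H y t) ^ 2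
              + g * H y t * zb y + g / 2 * (H y t) ^ 2 + H y t * p y t)) x = 0 := by
  intro x t
  -- time-direction HasDerivAt facts
  have hHt : HasDerivAt (fun s => H x s) (deriv (fun s => H x s) t) t :=
    ((diffT hH x) t).hasDerivAt
  have hut : HasDerivAt (fun s => u x s) (deriv (fun s => u x s) t) t :=
    ((diffT hu x) t).hasDerivAt
  have hwt : HasDerivAt (fun s => w x s) (deriv (fun s => w x s) t) t :=
    ((diffT hw x) t).hasDerivAt
  -- space-direction HasDerivAt facts
  have hHx : HasDerivAt (fun y => H y t) (deriv (fun y => H y t) x) x :=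
    ((diffX hH t) x).hasDerivAt
  have hux : HasDerivAt (fun y => u y t) (deriv (fun y => u y t) x) x :=
    ((diffX hu t) x).hasDerivAt
  have hwx : HasDerivAt (fun y => w y t) (deriv (fun y => w y t) x) x :=
    ((diffX hw t) x).hasDerivAt
  have hpx : HasDerivAt (fun y => p y t) (deriv (fun y => p y t) x) x :=
    ((diffX hp t) x).hasDerivAt
  have hzx : HasDerivAt zb (deriv zb x) x := ((hzb.differentiable (by simp)) x).hasDerivAt
  set Ht := deriv (fun s => H x s) t
  set ut := deriv (fun s => u x s) t
  set wt := deriv (fun s => w x s) t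
  set Hx := deriv (fun y => H y t) x
  set ux := deriv (fun y => u y t) x
  set wx := deriv (fun y => w y t) x
  set px := deriv (fun y => p y t) x
  set zx := deriv zb x
  -- expand hypotheses
  have e1 : deriv (fun y => H y t * u y t) x = Hx * u x t + H x t * ux :=
    (hHx.mul hux).deriv
  have mass' := mass x t
  rw [e1] at mass'
  have e2 : deriv (fun s => H x s * u x s) t = Ht * u x t + H x t * ut :=
    (hHt.mul hut).deriv
  have e3 : deriv (fun y => H y t * (u y t) ^ 2 + g / 2 * (H y t) ^ 2 + H y t * p y t) x
      = (Hx * (u x t) ^ 2 + H x t * (2 * u x t ^ 1 * ux))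
        + g / 2 * (2 * H x t ^ 1 * Hx) + (Hx * p x t + H x t * px) :=
    (((hHx.mul (hux.pow 2)).add ((hHx.pow 2).const_mul (g / 2))).add (hHx.mul hpx)).deriv
  have momx' := momx x t
  rw [e2, e3] at momx'
  have e4 : deriv (fun s => H x s * w x s) t = Ht * w x t + H x t * wt :=
    (hHt.mul hwt).deriv
  have e5 : deriv (fun y => H y t * w y t * u y t) x
      = (Hx * w x t + H x t * wx) * u x t + H x t * w x t * ux :=
    ((hHx.mul hwx).mul hux).deriv
  have momz' := momz x t
  rw [e4, e5] at momz'
  have e6 : deriv (fun y => H y t + 2 * zb y) x = Hx + 2 * zx :=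
    (hHx.add (hzx.const_mul 2)).deriv
  have divfree' := divfree x t
  rw [e1, e6] at divfree'
  -- expand goal
  have g1 : deriv (fun s =>
      H x s * ((u x s) ^ 2 + (w x s) ^ 2) / 2 + g / 2 * (H x s) ^ 2
        + g * H x s * zb x) t
      = (Ht * ((u x t) ^ 2 + (w x t) ^ 2)
          + H x t * (2 * u x t ^ 1 * ut + 2 * w x t ^ 1 * wt)) / 2
        + g / 2 * (2 * H x t ^ 1 * Ht) + (g * Ht) * zb x := by
    exact ((((hHt.mul ((hut.pow 2).add (hwt.pow 2))).div_const 2).add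
      ((hHt.pow 2).const_mul (g / 2))).add ((hHt.const_mul g).mul_const (zb x))).deriv
  have g2 : deriv (fun y =>
      u y t * (H y t * ((u y t) ^ 2 + (w y t) ^ 2) / 2 + g / 2 * (H y t) ^ 2
        + g * H y t * zb y + g / 2 * (H y t) ^ 2 + H y t * p y t)) x
      = ux * (H x t * ((u x t) ^ 2 + (w x t) ^ 2) / 2 + g / 2 * (H x t) ^ 2
          + g * H x t * zb x + g / 2 * (H x t) ^ 2 + H x t * p x t)
        + u x t * ((((Hx * ((u x t) ^ 2 + (w x t) ^ 2)
              + H x t * (2 * u x t ^ 1 * ux + 2 * w x t ^ 1 * wx)) / 2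
            + g / 2 * (2 * H x t ^ 1 * Hx))
            + ((g * Hx) * zb x + (g * H x t) * zx))
            + g / 2 * (2 * H x t ^ 1 * Hx) + (Hx * p x t + H x t * px)) := by
    exact (hux.mul (((((hHx.mul ((hux.pow 2).add (hwx.pow 2))).div_const 2).add
      ((hHx.pow 2).const_mul (g / 2))).add
      ((hHx.const_mul g).mul hzx)).add ((hHx.pow 2).const_mul (g / 2)) |>.add
      (hHx.mul hpx))).deriv
  rw [g1, g2]
  linear_combination (-(((u x t) ^ 2 + (w x t) ^ 2) / 2) + g * H x t + g * zb x) * mass'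
    + u x t * momx' + w x t * momz' + p x t * divfree'
end

section
/- If H and u are smooth with H > 0 and satisfy the mass equation ∂_t H + ∂_x(Hu) = 0 together with the divergence-free condition ∂_x(Hu) − u·∂_x(H + 2z_b) + 2w = 0 (with z_b time-independent), then ∂_t((H² + 2Hz_b)/2) + ∂_x(((H² + 2Hz_b)/2)·u) = H·w. -/
theorem stmt8 (H u w : ℝ → ℝ → ℝ) (zb : ℝ → ℝ)
    (hH : ContDiff ℝ (⊤ : ℕ∞) (Function.uncurry H)) (hu : ContDiff ℝ (⊤ : ℕ∞) (Function.uncurry u))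
    (hw : ContDiff ℝ (⊤ : ℕ∞) (Function.uncurry w)) (hzb : ContDiff ℝ (⊤ : ℕ∞) zb)
    (hpos : ∀ x t, 0 < H x t)
    (mass : ∀ x t, deriv (fun s => H x s) t + deriv (fun y => H y t * u y t) x = 0)
    (divfree : ∀ x t, deriv (fun y => H y t * u y t) x
        - u x t * deriv (fun y => H y t + 2 * zb y) x + 2 * w x t = 0) :
    ∀ x t,
      deriv (fun s => ((H x s) ^ 2 + 2 * H x s * zb x) / 2) t
        + deriv (fun y => ((H y t) ^ 2 + 2 * H y t * zb y) / 2 * u y t) x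
      = H x t * w x t := by
  intro x t
  have hHd := hH.differentiable (by simp)
  have hud := hu.differentiable (by simp)
  have hzbd := hzb.differentiable (by simp)
  -- slice differentiability
  have hHt : HasDerivAt (fun s => H x s) (deriv (fun s => H x s) t) t := by
    have : Differentiable ℝ (fun s => H x s) := by
      have := hHd.comp (differentiable_const x |>.prodMk differentiable_id)
      exact this
    exact (this t).hasDerivAt
  have hHx : HasDerivAt (fun y => H y t) (deriv (fun y => H y t) x) x := by
    have : Differentiable ℝ (fun y => H y t) := by
      have := hHd.comp (differentiable_id.prodMk (differentiable_const t))
      exact this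
    exact (this x).hasDerivAt
  have hux : HasDerivAt (fun y => u y t) (deriv (fun y => u y t) x) x := by
    have : Differentiable ℝ (fun y => u y t) := by
      have := hud.comp (differentiable_id.prodMk (differentiable_const t))
      exact this
    exact (this x).hasDerivAt
  have hzx : HasDerivAt zb (deriv zb x) x := (hzbd x).hasDerivAt
  set Ht := deriv (fun s => H x s) t
  set Hx := deriv (fun y => H y t) x
  set ux := deriv (fun y => u y t) x
  set zx := deriv zb x
  -- time derivative of energy
  have e1 : HasDerivAt (fun s => ((H x s) ^ 2 + 2 * H x s * zb x) / 2)
      ((2 * H x t ^ 1 * Ht + 2 * Ht * zb x) / 2) t := by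
    exact ((hHt.pow 2).add ((hHt.const_mul 2).mul_const (zb x))).div_const 2
  -- space derivative of energy flux
  have e2 : HasDerivAt (fun y => ((H y t) ^ 2 + 2 * H y t * zb y) / 2 * u y t)
      (((2 * H x t ^ 1 * Hx + (2 * Hx * zb x + 2 * H x t * zx)) / 2) * u x t
        + ((H x t) ^ 2 + 2 * H x t * zb x) / 2 * ux) x := by
    exact (((hHx.pow 2).add ((hHx.const_mul 2).mul hzx)).div_const 2).mul hux
  -- derivative of mass flux
  have e3 : HasDerivAt (fun y => H y t * u y t) (Hx * u x t + H x t * ux) x := hHx.mul hux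
  -- derivative of H + 2 zb
  have e4 : HasDerivAt (fun y => H y t + 2 * zb y) (Hx + 2 * zx) x :=
    hHx.add (hzx.const_mul 2)
  have hmass := mass x t
  have hdiv := divfree x t
  rw [e3.deriv, e4.deriv] at *
  rw [e1.deriv, e2.deriv]
  have hmass' : Ht + (Hx * u x t + H x t * ux) = 0 := hmass
  linear_combination (H x t + zb x) * hmass' - (H x t / 2) * hdiv
end

section
/- Suppose H > 0 and the smooth functions (H, u, w, p_nh) satisfy the nonconservative momentum equation ∂_t(u,w) + u·∂_x(u,w) + (g·∂_x H, 0) + (1/H)·∇_sw p_nh = (−g·∂_x z_b, 0), where ∇_sw p = (H·∂_x p + ∂_x(H+2z_b)·p, −2p), together with the mass equation ∂_t H + ∂_x(Hu) = 0 and the divergence-free condition div_sw(u,w) = ∂_x(Hu) − u·∂_x(H+2z_b) + 2w = 0. Then p_nh satisfies the elliptic equation −∂_x(H·∂_x p_nh) + (1/H)·(4 − H·∂_x²(H+2z_b) + (∂_x(H+2z_b))²)·p_nh = 2H·(∂_x u)² + 2u²·∂_x² z_b + gH·∂_x²(H+z_b) − 2g·∂_x z_b·∂_x(H+z_b). -/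
open Function

section helpers
variable {f : ℝ → ℝ → ℝ}

noncomputable def px (f : ℝ → ℝ → ℝ) : ℝ → ℝ → ℝ := fun x t => deriv (fun y => f y t) x
noncomputable def pt (f : ℝ → ℝ → ℝ) : ℝ → ℝ → ℝ := fun x t => deriv (fun s => f x s) t

lemma hasDerivAt_px (hf : ContDiff ℝ (⊤ : ℕ∞) (uncurry f)) (x t : ℝ) :
    HasDerivAt (fun y => f y t) (fderiv ℝ (uncurry f) (x, t) (1, 0)) x := by
  have h1 : HasDerivAt (fun y : ℝ => (y, t)) ((1:ℝ), (0:ℝ)) x :=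
    HasDerivAt.prodMk (hasDerivAt_id x) (hasDerivAt_const x t)
  have h2 := (hf.differentiable (by simp) (x, t)).hasFDerivAt
  simpa [Function.comp_def, uncurry] using h2.comp_hasDerivAt x h1

lemma hasDerivAt_pt (hf : ContDiff ℝ (⊤ : ℕ∞) (uncurry f)) (x t : ℝ) :
    HasDerivAt (fun s => f x s) (fderiv ℝ (uncurry f) (x, t) (0, 1)) t := by
  have h1 : HasDerivAt (fun s : ℝ => (x, s)) ((0:ℝ), (1:ℝ)) t :=
    HasDerivAt.prodMk (hasDerivAt_const t x) (hasDerivAt_id t)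
  have h2 := (hf.differentiable (by simp) (x, t)).hasFDerivAt
  simpa [Function.comp_def, uncurry] using h2.comp_hasDerivAt t h1

lemma px_eq (hf : ContDiff ℝ (⊤ : ℕ∞) (uncurry f)) (x t : ℝ) :
    px f x t = fderiv ℝ (uncurry f) (x, t) (1, 0) := (hasDerivAt_px hf x t).deriv

lemma pt_eq (hf : ContDiff ℝ (⊤ : ℕ∞) (uncurry f)) (x t : ℝ) :
    pt f x t = fderiv ℝ (uncurry f) (x, t) (0, 1) := (hasDerivAt_pt hf x t).deriv

lemma hasDerivAt_slice_x (hf : ContDiff ℝ (⊤ : ℕ∞) (uncurry f)) (t y : ℝ) :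
    HasDerivAt (fun z => f z t) (px f y t) y := (px_eq hf y t) ▸ hasDerivAt_px hf y t

lemma hasDerivAt_slice_t (hf : ContDiff ℝ (⊤ : ℕ∞) (uncurry f)) (x s : ℝ) :
    HasDerivAt (fun r => f x r) (pt f x s) s := (pt_eq hf x s) ▸ hasDerivAt_pt hf x s

lemma contDiff_px (hf : ContDiff ℝ (⊤ : ℕ∞) (uncurry f)) : ContDiff ℝ (⊤ : ℕ∞) (uncurry (px f)) := by
  have h : uncurry (px f) = fun q : ℝ × ℝ => fderiv ℝ (uncurry f) q ((1:ℝ), (0:ℝ)) := by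
    funext q; exact px_eq hf q.1 q.2
  rw [h]
  exact (ContinuousLinearMap.apply ℝ ℝ ((1:ℝ), (0:ℝ))).contDiff.comp (hf.fderiv_right (by simp))

lemma contDiff_pt (hf : ContDiff ℝ (⊤ : ℕ∞) (uncurry f)) : ContDiff ℝ (⊤ : ℕ∞) (uncurry (pt f)) := by
  have h : uncurry (pt f) = fun q : ℝ × ℝ => fderiv ℝ (uncurry f) q ((0:ℝ), (1:ℝ)) := by
    funext q; exact pt_eq hf q.1 q.2
  rw [h]
  exact (ContinuousLinearMap.apply ℝ ℝ ((0:ℝ), (1:ℝ))).contDiff.comp (hf.fderiv_right (by simp))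

lemma clairaut (hf : ContDiff ℝ (⊤ : ℕ∞) (uncurry f)) (x t : ℝ) :
    pt (px f) x t = px (pt f) x t := by
  set F := uncurry f with hF
  have hdF : ∀ q, HasFDerivAt F (fderiv ℝ F q) q := fun q =>
    (hf.differentiable (by simp) q).hasFDerivAt
  have hF' : ContDiff ℝ (⊤ : ℕ∞) (fderiv ℝ F) := hf.fderiv_right (by simp)
  have hdF2 : HasFDerivAt (fderiv ℝ F) (fderiv ℝ (fderiv ℝ F) (x, t)) (x, t) :=
    (hF'.differentiable (by simp) (x, t)).hasFDerivAt
  have hsymm := second_derivative_symmetric hdF hdF2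
  have h1 : HasDerivAt (fun s => fderiv ℝ F (x, s) ((1:ℝ), (0:ℝ)))
      (fderiv ℝ (fderiv ℝ F) (x, t) (0, 1) (1, 0)) t := by
    have hc : HasDerivAt (fun s : ℝ => ((x : ℝ), s)) ((0:ℝ), (1:ℝ)) t :=
      HasDerivAt.prodMk (hasDerivAt_const t x) (hasDerivAt_id t)
    have := (((ContinuousLinearMap.apply ℝ ℝ ((1:ℝ), (0:ℝ))).hasFDerivAt.comp (x, t)
      hdF2).comp_hasDerivAt t hc)
    simpa [Function.comp_def] using this
  have h2 : HasDerivAt (fun y => fderiv ℝ F (y, t) ((0:ℝ), (1:ℝ)))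
      (fderiv ℝ (fderiv ℝ F) (x, t) (1, 0) (0, 1)) x := by
    have hc : HasDerivAt (fun y : ℝ => (y, (t : ℝ))) ((1:ℝ), (0:ℝ)) x :=
      HasDerivAt.prodMk (hasDerivAt_id x) (hasDerivAt_const x t)
    have := (((ContinuousLinearMap.apply ℝ ℝ ((0:ℝ), (1:ℝ))).hasFDerivAt.comp (x, t)
      hdF2).comp_hasDerivAt x hc)
    simpa [Function.comp_def] using this
  have e1 : (fun s => px f x s) = fun s => fderiv ℝ F (x, s) ((1:ℝ), (0:ℝ)) := by
    funext s; exact px_eq hf x s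
  have e2 : (fun y => pt f y t) = fun y => fderiv ℝ F (y, t) ((0:ℝ), (1:ℝ)) := by
    funext y; exact pt_eq hf y t
  show deriv (fun s => px f x s) t = deriv (fun y => pt f y t) x
  rw [e1, e2, h1.deriv, h2.deriv]
  exact hsymm _ _

end helpers

theorem stmt9 (g : ℝ) (hg : 0 < g) (H u w p : ℝ → ℝ → ℝ) (zb : ℝ → ℝ)
    (hH : ContDiff ℝ (⊤ : ℕ∞) (Function.uncurry H)) (hu : ContDiff ℝ (⊤ : ℕ∞) (Function.uncurry u))
    (hw : ContDiff ℝ (⊤ : ℕ∞) (Function.uncurry w)) (hp : ContDiff ℝ (⊤ : ℕ∞) (Function.uncurry p))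
    (hzb : ContDiff ℝ (⊤ : ℕ∞) zb)
    (hpos : ∀ x t, 0 < H x t)
    (momx : ∀ x t, deriv (fun s => u x s) t + u x t * deriv (fun y => u y t) x
        + g * deriv (fun y => H y t) x
        + (1 / H x t) * (H x t * deriv (fun y => p y t) x
            + deriv (fun y => H y t + 2 * zb y) x * p x t)
        = -g * deriv zb x)
    (momz : ∀ x t, deriv (fun s => w x s) t + u x t * deriv (fun y => w y t) x
        + (1 / H x t) * (-2 * p x t) = 0)
    (mass : ∀ x t, deriv (fun s => H x s) t + deriv (fun y => H y t * u y t) x = 0)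
    (divfree : ∀ x t, deriv (fun y => H y t * u y t) x
        - u x t * deriv (fun y => H y t + 2 * zb y) x + 2 * w x t = 0) :
    ∀ x t,
      -(deriv (fun y => H y t * deriv (fun z => p z t) y) x)
        + (1 / H x t) * (4 - H x t * deriv (fun y => deriv (fun z => H z t + 2 * zb z) y) x
            + (deriv (fun y => H y t + 2 * zb y) x) ^ 2) * p x t
      = 2 * H x t * (deriv (fun y => u y t) x) ^ 2
        + 2 * (u x t) ^ 2 * deriv (deriv zb) x
        + g * H x t * deriv (fun y => deriv (fun z => H z t + zb z) y) x
        - 2 * g * deriv zb x * deriv (fun y => H y t + zb y) x := by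
  have hzb1 : Differentiable ℝ zb := hzb.differentiable (by simp)
  set Z : ℝ → ℝ → ℝ := fun x _ => zb x with hZdef
  have hZ : ContDiff ℝ (⊤ : ℕ∞) (Function.uncurry Z) := hzb.comp contDiff_fst
  have hzb2d : Differentiable ℝ (deriv zb) := by
    intro y
    exact ((hasDerivAt_slice_x (contDiff_px hZ) 0 y).congr_deriv rfl).differentiableAt
  have hpxH := contDiff_px hH
  have hpxu := contDiff_px hu
  have hpxp := contDiff_px hp
  have hptu := contDiff_pt hu
  have hne : ∀ x t, H x t ≠ 0 := fun x t => (hpos x t).ne'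
  intro x t
  have hdzb : ∀ y, HasDerivAt zb (deriv zb y) y := fun y => (hzb1 y).hasDerivAt
  have hddzb : ∀ y, HasDerivAt (deriv zb) (deriv (deriv zb) y) y := fun y => (hzb2d y).hasDerivAt
  have rptu : ∀ y s, deriv (fun r => u y r) s = pt u y s := fun _ _ => rfl
  have rptw : ∀ y s, deriv (fun r => w y r) s = pt w y s := fun _ _ => rfl
  have rptH : ∀ y s, deriv (fun r => H y r) s = pt H y s := fun _ _ => rfl
  have rpxu : ∀ y s, deriv (fun z => u z s) y = px u y s := fun _ _ => rfl
  have rpxw : ∀ y s, deriv (fun z => w z s) y = px w y s := fun _ _ => rfl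
  have rpxH : ∀ y s, deriv (fun z => H z s) y = px H y s := fun _ _ => rfl
  have rpxp : ∀ y s, deriv (fun z => p z s) y = px p y s := fun _ _ => rfl
  have ei : ∀ y s, deriv (fun z => H z s + 2 * zb z) y = px H y s + 2 * deriv zb y :=
    fun y s => ((hasDerivAt_slice_x hH s y).add ((hdzb y).const_mul 2)).deriv
  have ei2 : ∀ y s, deriv (fun z => H z s + zb z) y = px H y s + deriv zb y :=
    fun y s => ((hasDerivAt_slice_x hH s y).add (hdzb y)).deriv
  have eii : ∀ y s, deriv (fun z => H z s * u z s) y = px H y s * u y s + H y s * px u y s :=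
    fun y s => ((hasDerivAt_slice_x hH s y).mul (hasDerivAt_slice_x hu s y)).deriv
  simp only [rptu, rptw, rptH, rpxu, rpxw, rpxH, rpxp, ei, ei2, eii] at momx momz mass divfree ⊢
  -- F1 : simplified divergence-free
  have F1 : ∀ y s, H y s * px u y s - 2 * (u y s * deriv zb y) + 2 * w y s = 0 :=
    fun y s => by linear_combination divfree y s
  -- F2 : x-derivative of F1
  have F2 : ∀ y s, px H y s * px u y s + H y s * px (px u) y s
      - 2 * (px u y s * deriv zb y + u y s * deriv (deriv zb) y) + 2 * px w y s = 0 := by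
    intro y s
    have hD : HasDerivAt (fun z => H z s * px u z s - 2 * (u z s * deriv zb z) + 2 * w z s)
        (px H y s * px u y s + H y s * px (px u) y s
          - 2 * (px u y s * deriv zb y + u y s * deriv (deriv zb) y) + 2 * px w y s) y :=
      (((hasDerivAt_slice_x hH s y).mul (hasDerivAt_slice_x hpxu s y)).sub
        (((hasDerivAt_slice_x hu s y).mul (hddzb y)).const_mul 2)).add
        ((hasDerivAt_slice_x hw s y).const_mul 2)
    have h0 : (fun z => H z s * px u z s - 2 * (u z s * deriv zb z) + 2 * w z s)
        = fun _ => (0:ℝ) := funext fun z => F1 z s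
    have h1 : deriv (fun z => H z s * px u z s - 2 * (u z s * deriv zb z) + 2 * w z s) y = 0 := by
      rw [h0]; exact deriv_const y 0
    rw [hD.deriv] at h1
    exact h1
  -- F3 : t-derivative of F1, with Clairaut
  have F3 : ∀ y s, pt H y s * px u y s + H y s * px (pt u) y s
      - 2 * (pt u y s * deriv zb y) + 2 * pt w y s = 0 := by
    intro y s
    have hD : HasDerivAt (fun r => H y r * px u y r - 2 * (u y r * deriv zb y) + 2 * w y r)
        (pt H y s * px u y s + H y s * pt (px u) y s
          - 2 * (pt u y s * deriv zb y) + 2 * pt w y s) s :=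
      (((hasDerivAt_slice_t hH y s).mul (hasDerivAt_slice_t hpxu y s)).sub
        (((hasDerivAt_slice_t hu y s).mul_const (deriv zb y)).const_mul 2)).add
        ((hasDerivAt_slice_t hw y s).const_mul 2)
    have h0 : (fun r => H y r * px u y r - 2 * (u y r * deriv zb y) + 2 * w y r)
        = fun _ => (0:ℝ) := funext fun r => F1 y r
    have h1 : deriv (fun r => H y r * px u y r - 2 * (u y r * deriv zb y) + 2 * w y r) s = 0 := by
      rw [h0]; exact deriv_const s 0
    rw [hD.deriv, clairaut hu y s] at h1
    exact h1
  -- F4 : solve momx for pt u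
  have F4 : ∀ y s, pt u y s = -(u y s * px u y s) - g * px H y s - g * deriv zb y
      - (H y s)⁻¹ * (H y s * px p y s + (px H y s + 2 * deriv zb y) * p y s) := by
    intro y s
    have h := momx y s
    field_simp at h ⊢
    linear_combination h
  -- F5 : x-derivative of F4
  have F5 : ∀ y s, px (pt u) y s
      = -(px u y s * px u y s + u y s * px (px u) y s) - g * px (px H) y s
        - g * deriv (deriv zb) y
        - (-(px H y s) / H y s ^ 2 * (H y s * px p y s + (px H y s + 2 * deriv zb y) * p y s)
          + (H y s)⁻¹ * (px H y s * px p y s + H y s * px (px p) y s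
            + ((px (px H) y s + 2 * deriv (deriv zb) y) * p y s
              + (px H y s + 2 * deriv zb y) * px p y s))) := by
    intro y s
    have hD : HasDerivAt (fun z => -(u z s * px u z s) - g * px H z s - g * deriv zb z
        - (H z s)⁻¹ * (H z s * px p z s + (px H z s + 2 * deriv zb z) * p z s))
        (-(px u y s * px u y s + u y s * px (px u) y s) - g * px (px H) y s
          - g * deriv (deriv zb) y
          - (-(px H y s) / H y s ^ 2 * (H y s * px p y s + (px H y s + 2 * deriv zb y) * p y s)
            + (H y s)⁻¹ * (px H y s * px p y s + H y s * px (px p) y s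
              + ((px (px H) y s + 2 * deriv (deriv zb) y) * p y s
                + (px H y s + 2 * deriv zb y) * px p y s)))) y :=
      ((((hasDerivAt_slice_x hu s y).mul (hasDerivAt_slice_x hpxu s y)).neg.sub
        ((hasDerivAt_slice_x hpxH s y).const_mul g)).sub
        ((hddzb y).const_mul g)).sub
        (((hasDerivAt_slice_x hH s y).inv (hne y s)).mul
          (((hasDerivAt_slice_x hH s y).mul (hasDerivAt_slice_x hpxp s y)).add
            (((hasDerivAt_slice_x hpxH s y).add ((hddzb y).const_mul 2)).mul
              (hasDerivAt_slice_x hp s y))))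
    have h0 : (fun z => pt u z s) = (fun z => -(u z s * px u z s) - g * px H z s - g * deriv zb z
        - (H z s)⁻¹ * (H z s * px p z s + (px H z s + 2 * deriv zb z) * p z s)) :=
      funext fun z => F4 z s
    have h1 : px (pt u) y s = deriv (fun z => pt u z s) y := rfl
    rw [h1, h0]
    exact hD.deriv
  have hnex : H x t ≠ 0 := hne x t
  have P4 : H x t * pt u x t + H x t * (u x t * px u x t) + g * H x t * px H x t
      + g * H x t * deriv zb x
      + (H x t * px p x t + (px H x t + 2 * deriv zb x) * p x t) = 0 := by
    have h := F4 x t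
    field_simp at h
    linear_combination h
  have P5 : H x t ^ 2 * px (pt u) x t + H x t ^ 2 * (px u x t) ^ 2
      + H x t ^ 2 * (u x t * px (px u) x t)
      + g * H x t ^ 2 * px (px H) x t + g * H x t ^ 2 * deriv (deriv zb) x
      - px H x t * (H x t * px p x t + (px H x t + 2 * deriv zb x) * p x t)
      + H x t * (px H x t * px p x t + H x t * px (px p) x t
          + ((px (px H) x t + 2 * deriv (deriv zb) x) * p x t
            + (px H x t + 2 * deriv zb x) * px p x t)) = 0 := by
    have h := F5 x t
    field_simp at h
    have h2 : H x t * (H x t ^ 2 * px (pt u) x t + H x t ^ 2 * (px u x t) ^ 2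
        + H x t ^ 2 * (u x t * px (px u) x t)
        + g * H x t ^ 2 * px (px H) x t + g * H x t ^ 2 * deriv (deriv zb) x
        - px H x t * (H x t * px p x t + (px H x t + 2 * deriv zb x) * p x t)
        + H x t * (px H x t * px p x t + H x t * px (px p) x t
            + ((px (px H) x t + 2 * deriv (deriv zb) x) * p x t
              + (px H x t + 2 * deriv zb x) * px p x t))) = 0 := by
      linear_combination H x t * h
    exact (mul_eq_zero.mp h2).resolve_left hnex
  have P6 : H x t * pt w x t + H x t * (u x t * px w x t) - 2 * p x t = 0 := by
    have h := momz x t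
    field_simp at h
    linear_combination h
  have key : -(H x t * (px H x t * px p x t + H x t * px (px p) x t))
      + (4 - H x t * (px (px H) x t + 2 * deriv (deriv zb) x)
          + (px H x t + 2 * deriv zb x) ^ 2) * p x t
      - H x t * (2 * H x t * (px u x t) ^ 2 + 2 * (u x t) ^ 2 * deriv (deriv zb) x
          + g * H x t * (px (px H) x t + deriv (deriv zb) x)
          - 2 * g * deriv zb x * (px H x t + deriv zb x)) = 0 := by
    linear_combination (-2) * P6 + H x t * F3 x t + H x t * u x t * F2 x t
      - H x t * px u x t * (mass x t) + 2 * deriv zb x * P4 - P5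
  have g1 : deriv (fun y => H y t * px p y t) x
      = px H x t * px p x t + H x t * px (px p) x t :=
    ((hasDerivAt_slice_x hH t x).mul (hasDerivAt_slice_x hpxp t x)).deriv
  have g2 : deriv (fun y => px H y t + 2 * deriv zb y) x
      = px (px H) x t + 2 * deriv (deriv zb) x :=
    ((hasDerivAt_slice_x hpxH t x).add ((hddzb x).const_mul 2)).deriv
  have g3 : deriv (fun y => px H y t + deriv zb y) x
      = px (px H) x t + deriv (deriv zb) x :=
    ((hasDerivAt_slice_x hpxH t x).add (hddzb x)).deriv
  rw [g1, g2, g3]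
  field_simp
  linear_combination key
end

section
/- If smooth functions (H, u, w, p_nh) with H > 0 satisfy the generalized system with parameter α = 2: ∂_t H + ∂_x(Hu) = 0; ∂_t(Hu) + ∂_x(Hu²+(g/2)H²) + H·∂_x p_nh + ∂_x(H+2z_b)·p_nh = −gH·∂_x z_b; ∂_t(Hw) + ∂_x(Huw) = α·p_nh; and ∂_x(Hu) − u·∂_x(H+2z_b) + α·w = 0; then the energy balance ∂_t η̃^α + ∂_x(u·(η̃^α + (g/2)H² + H·p_nh)) = 0 holds with η̃² = (H/2)(u² + w²) + (g/2)H² + gHz_b. -/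
private lemma auxX {f : ℝ → ℝ → ℝ} (hf : ContDiff ℝ (⊤ : ℕ∞) (Function.uncurry f)) (x t : ℝ) :
    HasDerivAt (fun y => f y t) (deriv (fun y => f y t) x) x := by
  have h : Differentiable ℝ (fun y => f y t) :=
    (hf.differentiable (by simp)).comp (differentiable_id.prodMk (differentiable_const t))
  exact (h x).hasDerivAt

private lemma auxT {f : ℝ → ℝ → ℝ} (hf : ContDiff ℝ (⊤ : ℕ∞) (Function.uncurry f)) (x t : ℝ) :
    HasDerivAt (fun s => f x s) (deriv (fun s => f x s) t) t := by
  have h : Differentiable ℝ (fun s => f x s) :=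
    (hf.differentiable (by simp)).comp ((differentiable_const x).prodMk differentiable_id)
  exact (h t).hasDerivAt

theorem stmt10 (g α : ℝ) (hg : 0 < g) (hα : α = 2)
    (H u w p : ℝ → ℝ → ℝ) (zb : ℝ → ℝ)
    (hH : ContDiff ℝ (⊤ : ℕ∞) (Function.uncurry H)) (hu : ContDiff ℝ (⊤ : ℕ∞) (Function.uncurry u))
    (hw : ContDiff ℝ (⊤ : ℕ∞) (Function.uncurry w)) (hp : ContDiff ℝ (⊤ : ℕ∞) (Function.uncurry p))
    (hzb : ContDiff ℝ (⊤ : ℕ∞) zb)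
    (hpos : ∀ x t, 0 < H x t)
    (mass : ∀ x t, deriv (fun s => H x s) t + deriv (fun y => H y t * u y t) x = 0)
    (momx : ∀ x t, deriv (fun s => H x s * u x s) t
        + deriv (fun y => H y t * (u y t) ^ 2 + g / 2 * (H y t) ^ 2) x
        + H x t * deriv (fun y => p y t) x
        + deriv (fun y => H y t + 2 * zb y) x * p x t
        = -(g * H x t) * deriv zb x)
    (momz : ∀ x t, deriv (fun s => H x s * w x s) t
        + deriv (fun y => H y t * u y t * w y t) x = α * p x t)
    (divfree : ∀ x t, deriv (fun y => H y t * u y t) x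
        - u x t * deriv (fun y => H y t + 2 * zb y) x + α * w x t = 0) :
    ∀ x t,
      deriv (fun s =>
          H x s / 2 * ((u x s) ^ 2 + (2 * α - 1) / 3 * (w x s) ^ 2)
            + g / 2 * (H x s) ^ 2 + g * H x s * zb x) t
        + deriv (fun y =>
            u y t * (H y t / 2 * ((u y t) ^ 2 + (2 * α - 1) / 3 * (w y t) ^ 2)
              + g / 2 * (H y t) ^ 2 + g * H y t * zb y
              + g / 2 * (H y t) ^ 2 + H y t * p y t)) x = 0 := by
  subst hα
  intro x t
  have dHx := auxX hH x t
  have dUx := auxX hu x t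
  have dWx := auxX hw x t
  have dPx := auxX hp x t
  have dHt := auxT hH x t
  have dUt := auxT hu x t
  have dWt := auxT hw x t
  have dZb : HasDerivAt zb (deriv zb x) x := ((hzb.differentiable (by simp)) x).hasDerivAt
  -- rewrite composite derivatives in hypotheses
  have e1 : deriv (fun y => H y t * u y t) x = _ := (dHx.mul dUx).deriv
  have e2 : deriv (fun s => H x s * u x s) t = _ := (dHt.mul dUt).deriv
  have e3 : deriv (fun y => H y t * (u y t) ^ 2 + g / 2 * (H y t) ^ 2) x = _ :=
    ((dHx.mul (dUx.pow 2)).add (HasDerivAt.const_mul (g / 2) (dHx.pow 2))).deriv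
  have e4 : deriv (fun y => H y t + 2 * zb y) x = _ :=
    (dHx.add (HasDerivAt.const_mul 2 dZb)).deriv
  have e5 : deriv (fun s => H x s * w x s) t = _ := (dHt.mul dWt).deriv
  have e6 : deriv (fun y => H y t * u y t * w y t) x = _ := ((dHx.mul dUx).mul dWx).deriv
  have e7 : deriv (fun s =>
      H x s / 2 * ((u x s) ^ 2 + (2 * 2 - 1) / 3 * (w x s) ^ 2)
        + g / 2 * (H x s) ^ 2 + g * H x s * zb x) t = _ :=
    ((((dHt.div_const 2).mul ((dUt.pow 2).add
        (HasDerivAt.const_mul ((2 * 2 - 1) / 3) (dWt.pow 2)))).add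
      (HasDerivAt.const_mul (g / 2) (dHt.pow 2))).add
      ((HasDerivAt.const_mul g dHt).mul_const (zb x))).deriv
  have e8 : deriv (fun y =>
      u y t * (H y t / 2 * ((u y t) ^ 2 + (2 * 2 - 1) / 3 * (w y t) ^ 2)
        + g / 2 * (H y t) ^ 2 + g * H y t * zb y
        + g / 2 * (H y t) ^ 2 + H y t * p y t)) x = _ :=
    (dUx.mul (((((((dHx.div_const 2).mul ((dUx.pow 2).add
        (HasDerivAt.const_mul ((2 * 2 - 1) / 3) (dWx.pow 2)))).add
      (HasDerivAt.const_mul (g / 2) (dHx.pow 2))).add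
      ((HasDerivAt.const_mul g dHx).mul dZb)).add
      (HasDerivAt.const_mul (g / 2) (dHx.pow 2))).add
      (dHx.mul dPx)))).deriv
  have hm := mass x t
  have hx := momx x t
  have hz := momz x t
  have hd := divfree x t
  rw [e1] at hm hd
  rw [e2, e3, e4] at hx
  rw [e4] at hd
  rw [e5, e6] at hz
  rw [e7, e8]
  simp only [Pi.mul_apply, Pi.add_apply, Pi.pow_apply] at hx hz ⊢
  linear_combination (u x t) * hx + (w x t) * hz
    + (g * (H x t + zb x) - ((u x t) ^ 2 + (w x t) ^ 2) / 2) * hm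
    + (p x t) * hd
end

section
/- Let H₀ > 0, l > H₀, d ∈ ℝ \ {0}, c₀ = (l/d)·√(gH₀³/(l²−H₀²)), a = H₀³/(l²−H₀²), and set φ(x,t)=sech((x−c₀t)/l). Then H = H₀ + a·φ², u = c₀·(1 − d/H), w = −(a·c₀·d/(l·H))·φ·φ', p_nh = (a·c₀²·d²/(2l²H²))·((2H₀−H)·(φ')² + H·φ·φ'') satisfy the divergence-free condition ∂_x(Hu) − u·∂_x H + 2w = 0 (flat bottom z_b = 0). -/
/-!
Since `u = c₀ (1 - d/H)`, the flux is affine in the depth, `H u = c₀ (H - d)`, so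
`∂ₓ(H u) - u ∂ₓH = (c₀ d / H) ∂ₓH`. For `H = H₀ + a φ²` one has `∂ₓH = (2a/l) φ φ'`, and then
`(c₀ d / H) ∂ₓH` is exactly `-2w`.
-/

open Real

theorem deriv_mul_sub_mul_deriv_eq_of_eq_mul_one_sub_div {h u : ℝ → ℝ} {x : ℝ} (c d : ℝ)
    (hh : DifferentiableAt ℝ h x) (hx : h x ≠ 0) (hu : ∀ y, u y = c * (1 - d / h y)) :
    deriv (fun y => h y * u y) x - u x * deriv h x = c * d / h x * deriv h x := by
  have hflux : (fun y => h y * u y) =ᶠ[nhds x] fun y => c * (h y - d) := by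
    filter_upwards [hh.continuousAt.eventually_ne hx] with y hy
    rw [hu]
    field_simp
  rw [hflux.deriv_eq, deriv_const_mul c (hh.sub_const d), deriv_sub_const, hu]
  field_simp
  ring

theorem hasDerivAt_const_add_mul_sq_comp_sub_div {φ : ℝ → ℝ} (H0 a s l x : ℝ)
    (hφ : DifferentiableAt ℝ φ ((x - s) / l)) :
    HasDerivAt (fun y => H0 + a * φ ((y - s) / l) ^ 2)
      (2 * a / l * φ ((x - s) / l) * deriv φ ((x - s) / l)) x := by
  have hinner : HasDerivAt (fun y => (y - s) / l) (1 / l) x := by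
    simpa using ((hasDerivAt_id x).sub_const s).div_const l
  refine (((hφ.hasDerivAt.comp x hinner).fun_pow 2).const_mul a).const_add H0 |>.congr_deriv ?_
  simp only [Function.comp_apply]
  ring

theorem stmt12_general (H0 l d a c0 : ℝ) (hH0 : 0 < H0) (hl : H0 < l)
    (ha : a = H0 ^ 3 / (l ^ 2 - H0 ^ 2))
    (sech : ℝ → ℝ) (hsech : ∀ y, sech y = (Real.cosh y)⁻¹)
    (H u w : ℝ → ℝ → ℝ)
    (hHdef : ∀ x t, H x t = H0 + a * (sech ((x - c0 * t) / l)) ^ 2)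
    (hudef : ∀ x t, u x t = c0 * (1 - d / H x t))
    (hwdef : ∀ x t, w x t = -(a * c0 * d / (l * H x t)) * sech ((x - c0 * t) / l)
        * deriv sech ((x - c0 * t) / l)) :
    ∀ x t, deriv (fun y => H y t * u y t) x - u x t * deriv (fun y => H y t) x
        + 2 * w x t = 0 := by
  intro x t
  have ha0 : 0 ≤ a := ha ▸ div_nonneg (by positivity) (by nlinarith)
  have hsech_diff : Differentiable ℝ sech := by
    rw [funext hsech]
    exact differentiable_cosh.inv fun y => (cosh_pos y).ne'
  have hH : HasDerivAt (fun y => H y t)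
      (2 * a / l * sech ((x - c0 * t) / l) * deriv sech ((x - c0 * t) / l)) x := by
    simpa only [hHdef] using
      hasDerivAt_const_add_mul_sq_comp_sub_div H0 a (c0 * t) l x (hsech_diff _)
  have hHx : H x t ≠ 0 := by
    rw [hHdef]
    positivity
  rw [deriv_mul_sub_mul_deriv_eq_of_eq_mul_one_sub_div c0 d hH.differentiableAt hHx (hudef · t),
    hH.deriv, hwdef]
  field_simp
  ring

theorem stmt12 (g H0 l d a c0 : ℝ) (hg : 0 < g) (hH0 : 0 < H0) (hl : H0 < l) (hd : d ≠ 0)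
    (ha : a = H0 ^ 3 / (l ^ 2 - H0 ^ 2))
    (hc0 : c0 = (l / d) * Real.sqrt (g * H0 ^ 3 / (l ^ 2 - H0 ^ 2)))
    (sech : ℝ → ℝ) (hsech : ∀ y, sech y = (Real.cosh y)⁻¹)
    (H u w p : ℝ → ℝ → ℝ)
    (hHdef : ∀ x t, H x t = H0 + a * (sech ((x - c0 * t) / l)) ^ 2)
    (hudef : ∀ x t, u x t = c0 * (1 - d / H x t))
    (hwdef : ∀ x t, w x t = -(a * c0 * d / (l * H x t)) * sech ((x - c0 * t) / l)
        * deriv sech ((x - c0 * t) / l))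
    (hpdef : ∀ x t, p x t = a * c0 ^ 2 * d ^ 2 / (2 * l ^ 2 * (H x t) ^ 2)
        * ((2 * H0 - H x t) * (deriv sech ((x - c0 * t) / l)) ^ 2
            + H x t * sech ((x - c0 * t) / l) * deriv (deriv sech) ((x - c0 * t) / l))) :
    ∀ x t, deriv (fun y => H y t * u y t) x - u x t * deriv (fun y => H y t) x
        + 2 * w x t = 0 :=
  stmt12_general H0 l d a c0 hH0 hl ha sech hsech H u w hHdef hudef hwdef
end

section
/- Given the semi-discrete correction step u^{n+1} = u^{n+1/2} − (Δt/H)·∇_sw p with H = H^{n+1} = H^{n+1/2} > 0, where u = (u,w), ∇_sw p = (H·∂_x p + ∂_x(H+2z_b)·p, −2p), and the divergence-free condition ∂_x(Hu^{n+1}) − u^{n+1}·∂_x(H+2z_b) + 2w^{n+1} = 0, one has the energy inequality (H/2)·|u^{n+1}|² ≤ (H/2)·|u^{n+1/2}|² − Δt·∂_x(H·u^{n+1}·p). -/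
theorem stmt14 (Δt : ℝ) (hΔt : 0 < Δt) (H zb p u0 w0 u1 w1 : ℝ → ℝ)
    (hH : ContDiff ℝ (⊤ : ℕ∞) H) (hzb : ContDiff ℝ (⊤ : ℕ∞) zb) (hp : ContDiff ℝ (⊤ : ℕ∞) p)
    (hu0 : ContDiff ℝ (⊤ : ℕ∞) u0) (hw0 : ContDiff ℝ (⊤ : ℕ∞) w0)
    (hpos : ∀ x, 0 < H x)
    (hu1 : ∀ x, u1 x = u0 x - Δt / H x *
        (H x * deriv p x + deriv (fun y => H y + 2 * zb y) x * p x))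
    (hw1 : ∀ x, w1 x = w0 x - Δt / H x * (-2 * p x))
    (hdiv : ∀ x, deriv (fun y => H y * u1 y) x
        - u1 x * deriv (fun y => H y + 2 * zb y) x + 2 * w1 x = 0) :
    ∀ x, H x / 2 * ((u1 x) ^ 2 + (w1 x) ^ 2) ≤
      H x / 2 * ((u0 x) ^ 2 + (w0 x) ^ 2) - Δt * deriv (fun y => H y * u1 y * p y) x := by
  intro x
  have hHd : Differentiable ℝ H := hH.differentiable (by simp)
  have hpd : Differentiable ℝ p := hp.differentiable (by simp)
  have hu0d : Differentiable ℝ u0 := hu0.differentiable (by simp)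
  have hp' : Differentiable ℝ (deriv p) :=
    ((contDiff_infty_iff_deriv.mp (hp.of_le (by simp))).2).differentiable (by simp)
  have hDz : Differentiable ℝ (deriv (fun y => H y + 2 * zb y)) :=
    ((contDiff_infty_iff_deriv.mp
      ((hH.add (contDiff_const.mul hzb)).of_le (by simp))).2).differentiable (by simp)
  -- u1 is differentiable since it equals a smooth expression
  have hu1eq : u1 = fun x => u0 x - Δt / H x *
      (H x * deriv p x + deriv (fun y => H y + 2 * zb y) x * p x) := funext hu1
  have hu1d : Differentiable ℝ u1 := by
    rw [hu1eq]
    exact hu0d.sub (((differentiable_const Δt).div hHd fun x => (hpos x).ne').mul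
      ((hHd.mul hp').add
        (hDz.mul hpd)))
  have hHu1 : Differentiable ℝ (fun y => H y * u1 y) := hHd.mul hu1d
  have hderiv : deriv (fun y => H y * u1 y * p y) x
      = deriv (fun y => H y * u1 y) x * p x + H x * u1 x * deriv p x := by
    have := deriv_fun_mul (hHu1 x) (hpd x)
    simpa using this
  rw [hderiv]
  have hd := hdiv x
  have h1 := hu1 x
  have h2 := hw1 x
  set D := deriv (fun y => H y + 2 * zb y) x with hD
  set P := deriv p x with hP
  set K := deriv (fun y => H y * u1 y) x with hK
  have hHx := hpos x
  have hu0x : u0 x = u1 x + Δt / H x * (H x * P + D * p x) := by linarith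
  have hw0x : w0 x = w1 x + Δt / H x * (-2 * p x) := by linarith
  have hKx : K = u1 x * D - 2 * w1 x := by linarith
  rw [hKx, hu0x, hw0x]
  have hHne : H x ≠ 0 := hHx.ne'
  have key : H x / 2 * ((u1 x + Δt / H x * (H x * P + D * p x)) ^ 2
      + (w1 x + Δt / H x * (-2 * p x)) ^ 2)
      = H x / 2 * ((u1 x) ^ 2 + (w1 x) ^ 2)
        + Δt * (u1 x * (H x * P + D * p x) + w1 x * (-2 * p x))
        + Δt ^ 2 / (2 * H x) * ((H x * P + D * p x) ^ 2 + (-2 * p x) ^ 2) := by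
    field_simp
    ring
  rw [key]
  have hnn : 0 ≤ Δt ^ 2 / (2 * H x) * ((H x * P + D * p x) ^ 2 + (-2 * p x) ^ 2) := by
    apply mul_nonneg
    · positivity
    · positivity
  nlinarith [hnn]
end

section
/- Summation-by-parts for the discrete shallow water operators: for any sequences (u_i, w_i)_{i} and (p_{i+1/2})_i with compact support, define Δx_i·(∇_sw,i p)|₁ = H_i(p_{i+1/2} − p_{i−1/2}) + p_{i+1/2}(ζ_{i+1} − ζ_i) + p_{i−1/2}(ζ_i − ζ_{i−1}), Δx_i·(∇_sw,i p)|₂ = −(Δx_{i+1/2}·p_{i+1/2} + Δx_{i−1/2}·p_{i−1/2}), and Δx_{i+1/2}·div_{sw,i+1/2}(u,w) = (Hu)_{i+1} − (Hu)_i − (u_i + u_{i+1})(ζ_{i+1} − ζ_i) + Δx_{i+1/2}(w_{i+1} + w_i), with ζ_i = (H_i + 2z_{b,i})/2. Then Σ_i Δx_i·(∇_sw,i p)·(u_i, w_i) + Σ_i Δx_{i+1/2}·p_{i+1/2}·div_{sw,i+1/2}(u,w) = 0, where Σ_i Δx_i·(∇_sw,i p)·(u_i, w_i) = Σ_i Δx_i·(u_i·(∇_sw,i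 p)|₁ + w_i·(∇_sw,i p)|₂). -/
theorem stmt18 (H zb u w p dxc dxf : ℤ → ℝ)
    (hH : ∀ i, 0 < H i) (hdxc : ∀ i, 0 < dxc i) (hdxf : ∀ i, 0 < dxf i)
    (hu : (Function.support u).Finite) (hw : (Function.support w).Finite)
    (hp : (Function.support p).Finite) :
    let ζ : ℤ → ℝ := fun i => (H i + 2 * zb i) / 2
    (∑ᶠ i : ℤ,
        (u i * (H i * (p i - p (i - 1)) + p i * (ζ (i + 1) - ζ i)
            + p (i - 1) * (ζ i - ζ (i - 1)))
          + w i * (-(dxf i * p i + dxf (i - 1) * p (i - 1)))))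
      + (∑ᶠ i : ℤ,
          p i * ((H (i + 1) * u (i + 1) - H i * u i)
            - (u i + u (i + 1)) * (ζ (i + 1) - ζ i)
            + dxf i * (w (i + 1) + w i))) = 0 := by
  intro ζ
  set f : ℤ → ℝ := fun i =>
    u i * (H i * (p i - p (i - 1)) + p i * (ζ (i + 1) - ζ i)
        + p (i - 1) * (ζ i - ζ (i - 1)))
      + w i * (-(dxf i * p i + dxf (i - 1) * p (i - 1))) with hf
  set g : ℤ → ℝ := fun i =>
    p i * ((H (i + 1) * u (i + 1) - H i * u i)
        - (u i + u (i + 1)) * (ζ (i + 1) - ζ i)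
        + dxf i * (w (i + 1) + w i)) with hg
  set T : ℤ → ℝ := fun i =>
    -(u i * H i * p (i - 1)) + u i * p (i - 1) * (ζ i - ζ (i - 1))
      - w i * dxf (i - 1) * p (i - 1) with hT
  have hffin : (Function.support f).Finite := by
    apply Set.Finite.subset (hu.union hw)
    intro i hi
    by_contra h
    simp only [Set.mem_union, Function.mem_support, not_or, not_not] at h
    apply hi
    simp [hf, h.1, h.2]
  have hgfin : (Function.support g).Finite := by
    apply Set.Finite.subset hp
    intro i hi
    by_contra h
    simp only [Function.mem_support, not_not] at h
    apply hi
    simp [hg, h]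
  have hTfin : (Function.support T).Finite := by
    apply Set.Finite.subset (hp.image (fun j => j + 1))
    intro i hi
    have hpi : p (i - 1) ≠ 0 := by
      intro h
      apply hi
      simp [hT, h]
    exact ⟨i - 1, hpi, by ring⟩
  have hTsfin : (Function.support (fun i => T (i + 1))).Finite := by
    apply Set.Finite.subset hp
    intro i hi
    have : p i ≠ 0 := by
      intro h
      apply hi
      simp only [hT, Function.mem_support]
      simp [show i + 1 - 1 = i by ring, h]
    exact this
  have key : ∀ i, f i + g i = T i - T (i + 1) := by
    intro i
    simp only [hf, hg, hT]
    have h1 : (i + 1 : ℤ) - 1 = i := by ring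
    rw [h1]
    ring
  calc (∑ᶠ i, f i) + (∑ᶠ i, g i)
      = ∑ᶠ i, (f i + g i) := (finsum_add_distrib hffin hgfin).symm
    _ = ∑ᶠ i, (T i - T (i + 1)) := by
        exact finsum_congr key
    _ = (∑ᶠ i, T i) - (∑ᶠ i, T (i + 1)) := finsum_sub_distrib hTfin hTsfin
    _ = 0 := by
        rw [sub_eq_zero]
        have := finsum_comp_equiv (Equiv.addRight (1 : ℤ)) (f := T)
        simpa [Equiv.addRight] using this.symm
end

section
/- For the explicit transport update (Hw)^{n+1/2}_i = H_i w_i − σ_i(F_{i+1/2} w_{i+1/2} − F_{i−1/2} w_{i−1/2}) with upwind values w_{i+1/2} (equal to w_i if F_{i+1/2} ≥ 0, else w_{i+1}) and the mass update H^{n+1/2}_i = H_i − σ_i(F_{i+1/2} − F_{i−1/2}) with H^{n+1/2}_i > 0, the identity (H^{n+1/2}_i/2)(w^{n+1/2}_i)² − (H_i/2)w_i² + σ_i((w_{i+1/2}²/2)F_{i+1/2} − (w_{i−1/2}²/2)F_{i−1/2}) = (σ_i/2)[F_{i+1/2}]₋(w_{i+1}−w_i)² − (σ_i/2)[F_{i−1/2}]₊(w_i−w_{i−1})²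 + (H^{n+1/2}_i/2)(w^{n+1/2}_i − w_i)² holds, where w^{n+1/2}_i = (Hw)^{n+1/2}_i / H^{n+1/2}_i, [a]₊ = max(a,0), [a]₋ = min(a,0). -/
/-!
With the momentum update in mass-weighted form `H¹ w¹ = H w - σ (F_{i+1/2} a - F_{i-1/2} b)` and
the mass update `H¹ = H - σ (F_{i+1/2} - F_{i-1/2})`, the identity holds for arbitrary face values
`a`, `b`, with right-hand side `σ/2 (F_{i+1/2} (a - w)² - F_{i-1/2} (b - w)²) + H¹/2 (w¹ - w)²`.
For upwind face values a term `F (a - w)²` vanishes unless the flux enters the cell through that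
face, which turns it into `[F]₋ (w_{i+1} - w_i)²`, resp. `[F]₊ (w_i - w_{i-1})²`.
-/

theorem kineticEnergy_update_eq {σ H H₁ Fp Fm w w₁ a b : ℝ}
    (hmass : H₁ = H - σ * (Fp - Fm)) (hmom : H₁ * w₁ = H * w - σ * (Fp * a - Fm * b)) :
    H₁ / 2 * w₁ ^ 2 - H / 2 * w ^ 2 + σ * (a ^ 2 / 2 * Fp - b ^ 2 / 2 * Fm)
      = σ / 2 * (Fp * (a - w) ^ 2 - Fm * (b - w) ^ 2) + H₁ / 2 * (w₁ - w) ^ 2 := by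
  linear_combination w * hmom - w ^ 2 / 2 * hmass

theorem mul_sq_upwind_right_sub (F u v : ℝ) :
    F * ((if 0 ≤ F then u else v) - u) ^ 2 = min F 0 * (v - u) ^ 2 := by
  split_ifs with hF
  · simp [min_eq_right hF]
  · rw [min_eq_left (not_le.mp hF).le]

theorem mul_sq_upwind_left_sub (F u v : ℝ) :
    F * ((if 0 ≤ F then v else u) - u) ^ 2 = max F 0 * (u - v) ^ 2 := by
  split_ifs with hF
  · rw [max_eq_left hF, ← neg_sub, neg_sq]
  · simp [max_eq_right (not_le.mp hF).le]

theorem stmt19_general (σ Hi H1 Fp Fm wm wi wp : ℝ) (hH1 : 0 < H1)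
    (hH1def : H1 = Hi - σ * (Fp - Fm)) :
    let wph := if 0 ≤ Fp then wi else wp
    let wmh := if 0 ≤ Fm then wm else wi
    let Hw1 := Hi * wi - σ * (Fp * wph - Fm * wmh)
    let w1 := Hw1 / H1
    H1 / 2 * w1 ^ 2 - Hi / 2 * wi ^ 2 + σ * (wph ^ 2 / 2 * Fp - wmh ^ 2 / 2 * Fm)
      = σ / 2 * min Fp 0 * (wp - wi) ^ 2 - σ / 2 * max Fm 0 * (wi - wm) ^ 2
        + H1 / 2 * (w1 - wi) ^ 2 := by
  intro wph wmh Hw1 w1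
  have hmom : H1 * w1 = Hw1 := mul_div_cancel₀ Hw1 hH1.ne'
  rw [kineticEnergy_update_eq hH1def hmom, mul_sq_upwind_right_sub, mul_sq_upwind_left_sub]
  ring

theorem stmt19 (σ Hi H1 Fp Fm wm wi wp : ℝ) (hσ : 0 < σ) (hHi : 0 < Hi) (hH1 : 0 < H1)
    (hH1def : H1 = Hi - σ * (Fp - Fm)) :
    let wph := if 0 ≤ Fp then wi else wp
    let wmh := if 0 ≤ Fm then wm else wi
    let Hw1 := Hi * wi - σ * (Fp * wph - Fm * wmh)
    let w1 := Hw1 / H1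
    H1 / 2 * w1 ^ 2 - Hi / 2 * wi ^ 2 + σ * (wph ^ 2 / 2 * Fp - wmh ^ 2 / 2 * Fm)
      = σ / 2 * min Fp 0 * (wp - wi) ^ 2 - σ / 2 * max Fm 0 * (wi - wm) ^ 2
        + H1 / 2 * (w1 - wi) ^ 2 :=
  stmt19_general σ Hi H1 Fp Fm wm wi wp hH1 hH1def
end
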